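/- arXiv:2305.00755 — 2 statements merged into one kernel-verified Lean document; each statement's English description precedes it below -/
import Mathlib

section
/- Let L be a Lie algebra over a field. For all x₁, ..., x₅ ∈ L: [[[[x₁,x₂],x₃],x₄],x₅] + [[x₅,[[x₁,x₂],x₃]],x₄] + [[[x₄,x₅],[x₁,x₂]],x₃] + [[[x₃,[x₄,x₅]],x₁],x₂] + [[x₂,[x₃,[x₄,x₅]]],x₁] = 0. -/
private lemma cyc3 {L : Type*} [LieRing L] (a b c : L) :
    ⁅⁅a, b⁆, c⁆ + ⁅⁅c, a⁆, b⁆ = -⁅⁅b, c⁆, a⁆ := by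
  have hj := lie_jacobi a b c
  simp only [lie_lie, ← lie_skew c a, ← lie_skew b a, ← lie_skew c b] at *
  simp only [lie_neg, neg_lie, neg_neg] at *
  have hA : ⁅a, ⁅b, c⁆⁆ = ⁅b, ⁅a, c⁆⁆ - ⁅c, ⁅a, b⁆⁆ := by
    rw [← sub_eq_zero, ← hj]; abel
  rw [hA, show ⁅⁅a, c⁆, b⁆ = -⁅b, ⁅a, c⁆⁆ from (neg_eq_iff_eq_neg.mp (lie_skew b ⁅a, c⁆)).symm ▸ rfl]
  abel

private lemma key3 {L : Type*} [LieRing L] (m u a : L) :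
    -⁅m, ⁅u, a⁆⁆ + ⁅⁅m, u⁆, a⁆ - ⁅u, ⁅a, m⁆⁆ = 0 := by
  rw [lie_lie, ← lie_skew a m]
  simp only [lie_neg]
  abel

/-- the case i = 4 (all even) of the generalized Jacobi identity of Lemma 3.1
for an ordinary Lie algebra. -/
theorem generalized_jacobi_lie_i4 {𝕜 : Type*} [Field 𝕜] {L : Type*} [LieRing L]
    [LieAlgebra 𝕜 L] (x₁ x₂ x₃ x₄ x₅ : L) :
    ⁅⁅⁅⁅x₁, x₂⁆, x₃⁆, x₄⁆, x₅⁆ + ⁅⁅x₅, ⁅⁅x₁, x₂⁆, x₃⁆⁆, x₄⁆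
      + ⁅⁅⁅x₄, x₅⁆, ⁅x₁, x₂⁆⁆, x₃⁆ + ⁅⁅⁅x₃, ⁅x₄, x₅⁆⁆, x₁⁆, x₂⁆
      + ⁅⁅x₂, ⁅x₃, ⁅x₄, x₅⁆⁆⁆, x₁⁆ = 0 := by
  have h1 := cyc3 (⁅⁅x₁, x₂⁆, x₃⁆) x₄ x₅
  have h2 := cyc3 (⁅x₃, ⁅x₄, x₅⁆⁆) x₁ x₂
  have h3 := key3 (⁅x₄, x₅⁆) (⁅x₁, x₂⁆) x₃
  calc ⁅⁅⁅⁅x₁, x₂⁆, x₃⁆, x₄⁆, x₅⁆ + ⁅⁅x₅, ⁅⁅x₁, x₂⁆, x₃⁆⁆, x₄⁆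
      + ⁅⁅⁅x₄, x₅⁆, ⁅x₁, x₂⁆⁆, x₃⁆ + ⁅⁅⁅x₃, ⁅x₄, x₅⁆⁆, x₁⁆, x₂⁆
      + ⁅⁅x₂, ⁅x₃, ⁅x₄, x₅⁆⁆⁆, x₁⁆
      = (⁅⁅⁅⁅x₁, x₂⁆, x₃⁆, x₄⁆, x₅⁆ + ⁅⁅x₅, ⁅⁅x₁, x₂⁆, x₃⁆⁆, x₄⁆)
        + ⁅⁅⁅x₄, x₅⁆, ⁅x₁, x₂⁆⁆, x₃⁆
        + (⁅⁅⁅x₃, ⁅x₄, x₅⁆⁆, x₁⁆, x₂⁆ + ⁅⁅x₂, ⁅x₃, ⁅x₄, x₅⁆⁆⁆, x₁⁆) := by abel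
    _ = -⁅⁅x₄, x₅⁆, ⁅⁅x₁, x₂⁆, x₃⁆⁆ + ⁅⁅⁅x₄, x₅⁆, ⁅x₁, x₂⁆⁆, x₃⁆
        + -⁅⁅x₁, x₂⁆, ⁅x₃, ⁅x₄, x₅⁆⁆⁆ := by rw [h1, h2]
    _ = 0 := by rw [← h3]; abel
end

section
/- For integers m, n ≥ 0, r, s ≥ 0 with r + s ≥ 1 and 2 ≤ c, setting l = min{c, m+n−r−s}, the new bound (1/2)[(m+n−r−s)(m+n+r+s) + (n−m−r−3s)] − Σ_{i=2}^{l}(m+n−r−s−i) is less than or equal to Nayak's bound (1/2)[(m+n+r+s−2)(m+n−r−s−1)] + n + 1 whenever m+n−r−s ≥ 2. -/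
open Finset in
/-- the bound of the present paper is at most Nayak's bound. -/
theorem new_bound_le_nayak (m n r s c : ℕ) (hrs : 1 ≤ r + s) (hc : 2 ≤ c)
    (h2 : r + s + 2 ≤ m + n) :
    (1 / 2 : ℚ) * (((m : ℚ) + n - r - s) * ((m : ℚ) + n + r + s)
        + ((n : ℚ) - m - r - 3 * s))
      - ∑ i ∈ Icc 2 (min c (m + n - r - s)), (((m : ℚ) + n - r - s) - i)
    ≤ (1 / 2 : ℚ) * (((m : ℚ) + n + r + s - 2) * ((m : ℚ) + n - r - s - 1)) + n + 1 := by
  have hl : 2 ≤ min c (m + n - r - s) := le_min hc (by omega)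
  have hmem : 2 ∈ Icc 2 (min c (m + n - r - s)) := mem_Icc.mpr ⟨le_refl _, hl⟩
  have hsum : (((m : ℚ) + n - r - s) - 2)
      ≤ ∑ i ∈ Icc 2 (min c (m + n - r - s)), (((m : ℚ) + n - r - s) - i) := by
    have h := Finset.single_le_sum (f := fun i : ℕ => ((m : ℚ) + n - r - s) - i)
      (fun i hi => by
        have hi' : i ≤ m + n - r - s := le_trans (mem_Icc.mp hi).2 (min_le_right _ _)
        have hi'' : i + r + s ≤ m + n := by omega
        have : (i : ℚ) + r + s ≤ (m : ℚ) + n := by exact_mod_cast hi''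
        show (0:ℚ) ≤ (m : ℚ) + n - r - s - i
        linarith) hmem
    simpa using h
  have hs : (0 : ℚ) ≤ s := Nat.cast_nonneg s
  nlinarith [hsum, hs]
end
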